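/- arXiv:1504.05852 — 7 statements merged into one kernel-verified Lean document; each statement's English description precedes it below -/
import Mathlib

section
/- Let c : ℝ → ℝ be a continuous T-periodic function (T > 0) with mean value (1/T)∫₀ᵀ c(t) dt > 0. Then the logistic periodic problem w'(t) = w(t)(c(t) - w(t)), w(0) = w(T), has a unique positive T-periodic solution. -/
open intervalIntegral MeasureTheory

/-- The logistic periodic problem w' = w(c - w), w(0) = w(T), with c continuous,
T-periodic, of positive mean, has a unique positive T-periodic solution. -/
theorem logistic_periodic_exists_unique
    (T : ℝ) (hT : 0 < T) (c : ℝ → ℝ) (hc : Continuous c)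
    (hper : ∀ t, c (t + T) = c t)
    (hmean : 0 < (1 / T) * ∫ t in (0:ℝ)..T, c t) :
    ∃! w : ℝ → ℝ, Differentiable ℝ w ∧ (∀ t, 0 < w t) ∧
      (∀ t, deriv w t = w t * (c t - w t)) ∧ (∀ t, w (t + T) = w t) := by
  have hcint : ∀ a b : ℝ, IntervalIntegrable c volume a b := fun a b =>
    hc.intervalIntegrable a b
  set C : ℝ → ℝ := fun t => ∫ s in (0:ℝ)..t, c s with hCdef
  have hCd : ∀ t, HasDerivAt C (c t) t := fun t =>
    integral_hasDerivAt_right (hcint 0 t)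
      hc.aestronglyMeasurable.stronglyMeasurableAtFilter hc.continuousAt
  have hmean' : 0 < (1 / T) * C T := hmean
  have hC0 : C 0 = 0 := integral_same
  have hCadd : ∀ s, C (s + T) = C s + C T := by
    intro s
    have hadj := integral_add_adjacent_intervals (hcint 0 T) (hcint T (s + T))
    have hshift : (∫ x in (0:ℝ)..s, c (x + T)) = ∫ x in T..(s + T), c x := by
      simpa using integral_comp_add_right (a := (0:ℝ)) (b := s) c T
    have hcongr : (∫ x in (0:ℝ)..s, c (x + T)) = ∫ x in (0:ℝ)..s, c x :=
      integral_congr fun x _ => hper x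
    show (∫ x in (0:ℝ)..(s + T), c x) = C s + C T
    rw [← hadj, ← hshift, hcongr]
    ring
  set E : ℝ → ℝ := fun t => Real.exp (C t) with hEdef
  have hEd : ∀ t, HasDerivAt E (E t * c t) t := fun t => (hCd t).exp
  have hEpos : ∀ t, 0 < E t := fun t => Real.exp_pos _
  have hEcont : Continuous E :=
    Real.continuous_exp.comp (Differentiable.continuous fun t => (hCd t).differentiableAt)
  have hEint : ∀ a b : ℝ, IntervalIntegrable E volume a b := fun a b =>
    hEcont.intervalIntegrable a b
  have hEadd : ∀ s, E (s + T) = Real.exp (C T) * E s := by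
    intro s
    show Real.exp (C (s + T)) = _
    rw [hCadd s, Real.exp_add]
    ring
  have hET : E T = Real.exp (C T) := rfl
  have hE0 : E 0 = 1 := by show Real.exp (C 0) = 1; rw [hC0, Real.exp_zero]
  have hCT : 0 < C T := by
    by_contra h
    push_neg at h
    nlinarith [one_div_pos.mpr hT]
  clear_value C
  clear hCdef hmean hmean'
  set I : ℝ := ∫ s in (0:ℝ)..T, E s with hIdef
  have hI : 0 < I := intervalIntegral_pos_of_pos (hEint 0 T) hEpos hT
  have hden : 0 < Real.exp (C T) - 1 := by
    have := Real.one_lt_exp_iff.mpr hCT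
    linarith
  set a₀ : ℝ := I / (Real.exp (C T) - 1) with ha₀def
  have ha₀ : 0 < a₀ := div_pos hI hden
  have hkey : a₀ * Real.exp (C T) = a₀ + I := by
    have h2 : a₀ * (Real.exp (C T) - 1) = I := div_mul_cancel₀ I hden.ne'
    linear_combination h2
  clear_value a₀
  set D : ℝ → ℝ := fun t => a₀ + ∫ s in (0:ℝ)..t, E s with hDdef
  have hDd : ∀ t, HasDerivAt D (E t) t := fun t =>
    HasDerivAt.const_add a₀ (integral_hasDerivAt_right (hEint 0 t)
      hEcont.aestronglyMeasurable.stronglyMeasurableAtFilter hEcont.continuousAt)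
  have hD0 : D 0 = a₀ := by
    show a₀ + (∫ s in (0:ℝ)..(0:ℝ), E s) = a₀
    simp
  have hDadd : ∀ t, D (t + T) = Real.exp (C T) * D t := by
    intro t
    have hadj := integral_add_adjacent_intervals (hEint 0 T) (hEint T (t + T))
    have hshift : (∫ x in (0:ℝ)..t, E (x + T)) = ∫ x in T..(t + T), E x := by
      simpa using integral_comp_add_right (a := (0:ℝ)) (b := t) E T
    have hcongr : (∫ x in (0:ℝ)..t, E (x + T))
        = Real.exp (C T) * ∫ x in (0:ℝ)..t, E x := by
      rw [integral_congr (g := fun x => Real.exp (C T) * E x) fun x _ => hEadd x]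
      exact integral_const_mul _ _
    show a₀ + (∫ x in (0:ℝ)..(t + T), E x) = Real.exp (C T) * (a₀ + ∫ x in (0:ℝ)..t, E x)
    rw [← hadj, ← hshift, hcongr, ← hIdef]
    linear_combination -hkey
  clear_value D I
  clear hIdef hDdef
  have hDmono : StrictMono D :=
    strictMono_of_deriv_pos fun t => by rw [(hDd t).deriv]; exact hEpos t
  have hDn : ∀ n : ℕ, ∀ t, D (t + n * T) = Real.exp (C T) ^ n * D t := by
    intro n
    induction n with
    | zero => intro t; simp
    | succ k ih =>
      intro t
      have h1 : t + ((k : ℕ) + 1 : ℕ) * T = (t + k * T) + T := by push_cast; ring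
      rw [h1, hDadd, ih, pow_succ]
      ring
  have hDpos : ∀ t, 0 < D t := by
    intro t
    obtain ⟨n, hn⟩ := exists_nat_ge (-t / T)
    have htn : (0:ℝ) ≤ t + n * T := by
      have h2 := (div_le_iff₀ hT).mp hn
      linarith
    have h1 : a₀ ≤ D (t + n * T) := by
      rw [← hD0]
      exact hDmono.monotone htn
    have h2 : 0 < Real.exp (C T) ^ n * D t := by rw [← hDn n t]; linarith
    have h3 : 0 < Real.exp (C T) ^ n := pow_pos (Real.exp_pos _) n
    by_contra h
    push_neg at h
    nlinarith
  clear_value E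
  set w₀ : ℝ → ℝ := fun t => E t / D t with hw₀def
  have hw₀d : ∀ t, HasDerivAt w₀ ((E t * c t * D t - E t * E t) / D t ^ 2) t :=
    fun t => (hEd t).div (hDd t) (hDpos t).ne'
  have hw₀pos : ∀ t, 0 < w₀ t := fun t => div_pos (hEpos t) (hDpos t)
  have hw₀deriv : ∀ t, deriv w₀ t = w₀ t * (c t - w₀ t) := by
    intro t
    rw [(hw₀d t).deriv]
    show _ = E t / D t * (c t - E t / D t)
    field_simp [(hDpos t).ne']
  have hw₀per : ∀ t, w₀ (t + T) = w₀ t := by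
    intro t
    show E (t + T) / D (t + T) = E t / D t
    rw [hEadd, hDadd, mul_div_mul_left _ _ (Real.exp_pos (C T)).ne']
  refine ⟨w₀, ⟨fun t => (hw₀d t).differentiableAt, hw₀pos, hw₀deriv, hw₀per⟩, ?_⟩
  rintro w ⟨hwd, hwpos, hwderiv, hwper⟩
  have hwHas : ∀ t, HasDerivAt w (w t * (c t - w t)) t := fun t =>
    hwderiv t ▸ (hwd t).hasDerivAt
  set g : ℝ → ℝ := fun t => E t / w t - D t with hgdef
  have hgd : ∀ t, HasDerivAt g 0 t := by
    intro t
    have h1 : HasDerivAt (fun t => E t / w t)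
        ((E t * c t * w t - E t * (w t * (c t - w t))) / w t ^ 2) t :=
      (hEd t).div (hwHas t) (hwpos t).ne'
    have h2 : (E t * c t * w t - E t * (w t * (c t - w t))) / w t ^ 2 = E t := by
      field_simp [(hwpos t).ne']
      ring
    rw [h2] at h1
    have h3 := h1.sub (hDd t)
    rw [sub_self] at h3
    exact h3
  have hconst : ∀ x y, g x = g y :=
    is_const_of_deriv_eq_zero (fun t => (hgd t).differentiableAt)
      (fun t => (hgd t).deriv)
  have hwT : w T = w 0 := by
    have := hwper 0
    rwa [zero_add] at this
  have hDT : D T = Real.exp (C T) * a₀ := by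
    have h := hDadd 0
    rwa [zero_add, hD0] at h
  have hg0 : g 0 = 0 := by
    have h := hconst T 0
    have hgT : g T = Real.exp (C T) * (1 / w 0 - a₀) := by
      show E T / w T - D T = _
      rw [hwT, hET, hDT, mul_sub, mul_one_div]
    have hg0' : g 0 = 1 / w 0 - a₀ := by
      show E 0 / w 0 - D 0 = _
      rw [hE0, hD0]
    rw [hgT, hg0'] at h
    have hx : (Real.exp (C T) - 1) * (1 / w 0 - a₀) = 0 := by linear_combination h
    rcases mul_eq_zero.mp hx with h' | h'
    · exact absurd h' hden.ne'
    · rw [hg0', h']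
  funext t
  have hgt : g t = 0 := (hconst t 0).trans hg0
  have hEw : E t / w t = D t := by
    have h : E t / w t - D t = 0 := hgt
    linarith
  rw [div_eq_iff (hwpos t).ne'] at hEw
  show w t = E t / D t
  rw [eq_div_iff (hDpos t).ne']
  linear_combination -hEw
end

section
/- Let c₁, c₂ : ℝ → ℝ be continuous T-periodic functions with c₁(t) ≤ c₂(t) for all t, and let w₁, w₂ be positive T-periodic solutions of wᵢ' = wᵢ(cᵢ(t) - wᵢ). Then w₁(t) ≤ w₂(t) for all t. -/
/-- Comparison principle for positive periodic solutions of the logistic equation: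
if c₁ ≤ c₂ then the corresponding positive T-periodic solutions satisfy w₁ ≤ w₂. -/
theorem logistic_periodic_comparison
    (T : ℝ) (hT : 0 < T) (c₁ c₂ : ℝ → ℝ)
    (hc₁ : Continuous c₁) (hc₂ : Continuous c₂)
    (hper₁ : ∀ t, c₁ (t + T) = c₁ t) (hper₂ : ∀ t, c₂ (t + T) = c₂ t)
    (hle : ∀ t, c₁ t ≤ c₂ t)
    (w₁ w₂ : ℝ → ℝ)
    (hw₁ : Differentiable ℝ w₁) (hw₂ : Differentiable ℝ w₂)
    (hpos₁ : ∀ t, 0 < w₁ t) (hpos₂ : ∀ t, 0 < w₂ t)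
    (hode₁ : ∀ t, deriv w₁ t = w₁ t * (c₁ t - w₁ t))
    (hode₂ : ∀ t, deriv w₂ t = w₂ t * (c₂ t - w₂ t))
    (hwper₁ : ∀ t, w₁ (t + T) = w₁ t) (hwper₂ : ∀ t, w₂ (t + T) = w₂ t) :
    ∀ t, w₁ t ≤ w₂ t := by
  set u : ℝ → ℝ := fun t => Real.log (w₁ t) - Real.log (w₂ t) with hu_def
  have hud : ∀ t, HasDerivAt u ((c₁ t - w₁ t) - (c₂ t - w₂ t)) t := by
    intro t
    have h1 : HasDerivAt (fun s => Real.log (w₁ s)) (deriv w₁ t / w₁ t) t :=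
      (hw₁ t).hasDerivAt.log (hpos₁ t).ne'
    have h2 : HasDerivAt (fun s => Real.log (w₂ s)) (deriv w₂ t / w₂ t) t :=
      (hw₂ t).hasDerivAt.log (hpos₂ t).ne'
    have := h1.sub h2
    have e1 : deriv w₁ t / w₁ t = c₁ t - w₁ t := by
      rw [hode₁ t]; field_simp [(hpos₁ t).ne']
    have e2 : deriv w₂ t / w₂ t = c₂ t - w₂ t := by
      rw [hode₂ t]; field_simp [(hpos₂ t).ne']
    rw [e1, e2] at this
    exact this
  have huc : Continuous u := by
    exact (hw₁.continuous.log fun x => (hpos₁ x).ne').sub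
      (hw₂.continuous.log fun x => (hpos₂ x).ne')
  have huper : ∀ t, u (t + T) = u t := by
    intro t; simp [hu_def, hwper₁ t, hwper₂ t]
  -- max of u on [0, T]
  obtain ⟨t₀, ht₀mem, ht₀max⟩ := isCompact_Icc.exists_isMaxOn (Set.nonempty_Icc.2 hT.le)
    (huc.continuousOn : ContinuousOn u (Set.Icc 0 T))
  have hglobal : ∀ t, u t ≤ u t₀ := by
    intro t
    obtain ⟨y, hy, hyt⟩ := (Function.Periodic.exists_mem_Ico₀ (fun s => huper s) hT t)
    rw [hyt]
    exact ht₀max (Set.Ico_subset_Icc_self hy)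
  have hderiv0 : (c₁ t₀ - w₁ t₀) - (c₂ t₀ - w₂ t₀) = 0 := by
    have hloc : IsLocalMax u t₀ := Filter.Eventually.of_forall hglobal
    exact hloc.hasDerivAt_eq_zero (hud t₀)
  have hkey : w₁ t₀ ≤ w₂ t₀ := by
    have := hle t₀; linarith
  have hu0 : u t₀ ≤ 0 := by
    have := Real.log_le_log (hpos₁ t₀) hkey
    simp only [hu_def]; linarith
  simp only [hu_def] at hu0
  intro t
  have : Real.log (w₁ t) ≤ Real.log (w₂ t) := by
    have := hglobal t; simp only [hu_def] at this; linarith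
  exact (Real.log_le_log_iff (hpos₁ t) (hpos₂ t)).1 this
end

section
/- Let c : ℝ → ℝ be a continuous T-periodic function and w a positive T-periodic solution of w' = w(c(t) - w). Then min over [0,T] of c ≤ w(t) ≤ max over [0,T] of c for all t; in particular w(t) ≤ sup |c|. -/
/-- A positive T-periodic solution of the logistic equation w' = w(c - w) satisfies
min_{[0,T]} c ≤ w ≤ max_{[0,T]} c, and in particular w ≤ sup |c|. -/
theorem logistic_periodic_bounds
    (T : ℝ) (hT : 0 < T) (c : ℝ → ℝ) (hc : Continuous c)
    (hper : ∀ t, c (t + T) = c t)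
    (w : ℝ → ℝ) (hw : Differentiable ℝ w) (hpos : ∀ t, 0 < w t)
    (hode : ∀ t, deriv w t = w t * (c t - w t))
    (hwper : ∀ t, w (t + T) = w t) :
    ∀ t, sInf (c '' Set.Icc 0 T) ≤ w t ∧ w t ≤ sSup (c '' Set.Icc 0 T) ∧
      w t ≤ sSup ((fun s => |c s|) '' Set.Icc 0 T) := by
  have hwp : Function.Periodic w T := hwper
  have hwc : Continuous w := hw.continuous
  have hne : (Set.Icc (0:ℝ) T).Nonempty := Set.nonempty_Icc.2 hT.le
  -- max of w on [0,T]
  obtain ⟨t₀, ht₀, hmax⟩ := isCompact_Icc.exists_isMaxOn hne hwc.continuousOn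
  obtain ⟨t₁, ht₁, hmin⟩ := isCompact_Icc.exists_isMinOn hne hwc.continuousOn
  -- global max/min
  have hgmax : ∀ t, w t ≤ w t₀ := by
    intro t
    obtain ⟨y, hy, hyeq⟩ := hwp.exists_mem_Ico₀ hT t
    rw [hyeq]; exact hmax (Set.Ico_subset_Icc_self hy)
  have hgmin : ∀ t, w t₁ ≤ w t := by
    intro t
    obtain ⟨y, hy, hyeq⟩ := hwp.exists_mem_Ico₀ hT t
    rw [hyeq]; exact hmin (Set.Ico_subset_Icc_self hy)
  have hd0 : deriv w t₀ = 0 := by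
    have : IsLocalMax w t₀ := Filter.Eventually.of_forall hgmax
    exact this.deriv_eq_zero
  have hd1 : deriv w t₁ = 0 := by
    have : IsLocalMin w t₁ := Filter.Eventually.of_forall hgmin
    exact this.deriv_eq_zero
  have hw0 : w t₀ = c t₀ := by
    have := hode t₀
    rw [hd0] at this
    rcases mul_eq_zero.1 this.symm with h | h
    · exact absurd h (hpos t₀).ne'
    · linarith [sub_eq_zero.1 h]
  have hw1 : w t₁ = c t₁ := by
    have := hode t₁
    rw [hd1] at this
    rcases mul_eq_zero.1 this.symm with h | h
    · exact absurd h (hpos t₁).ne'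
    · linarith [sub_eq_zero.1 h]
  have hbddA : BddAbove (c '' Set.Icc 0 T) := (isCompact_Icc.image hc).bddAbove
  have hbddB : BddBelow (c '' Set.Icc 0 T) := (isCompact_Icc.image hc).bddBelow
  have hbddC : BddAbove ((fun s => |c s|) '' Set.Icc 0 T) :=
    (isCompact_Icc.image (hc.abs)).bddAbove
  intro t
  have h1 : w t ≤ sSup (c '' Set.Icc 0 T) := by
    calc w t ≤ w t₀ := hgmax t
    _ = c t₀ := hw0
    _ ≤ _ := le_csSup hbddA ⟨t₀, ht₀, rfl⟩
  refine ⟨?_, h1, ?_⟩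
  · calc sInf (c '' Set.Icc 0 T) ≤ c t₁ := csInf_le hbddB ⟨t₁, ht₁, rfl⟩
    _ = w t₁ := hw1.symm
    _ ≤ w t := hgmin t
  · refine h1.trans (csSup_le (hne.image c) ?_)
    rintro y ⟨s, hs, rfl⟩
    exact (le_abs_self _).trans (le_csSup hbddC ⟨s, hs, rfl⟩)
end

section
/- Let c : ℝ → ℝ be continuous and T-periodic with (1/T)∫₀ᵀ c(t) dt ≤ 0. Then any nonnegative T-periodic solution w of w' = w(c(t) - w) is identically zero. In other words, no positive T-periodic solution exists when the mean of c is nonpositive. -/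
/-- If the mean of c over a period is nonpositive, any nonnegative T-periodic
solution of w' = w(c - w) is identically zero. -/
theorem logistic_periodic_no_positive_solution
    (T : ℝ) (hT : 0 < T) (c : ℝ → ℝ) (hc : Continuous c)
    (hper : ∀ t, c (t + T) = c t)
    (hmean : (1 / T) * ∫ t in (0:ℝ)..T, c t ≤ 0)
    (w : ℝ → ℝ) (hw : Differentiable ℝ w) (hnonneg : ∀ t, 0 ≤ w t)
    (hode : ∀ t, deriv w t = w t * (c t - w t))
    (hwper : ∀ t, w (t + T) = w t) :
    ∀ t, w t = 0 := by
  by_contra h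
  push_neg at h
  obtain ⟨t₀, ht₀⟩ := h
  have ht₀pos : 0 < w t₀ := lt_of_le_of_ne (hnonneg t₀) (Ne.symm ht₀)
  have hwcont : Continuous w := hw.continuous
  have hpw : Function.Periodic w T := hwper
  -- Step 1: w is positive everywhere.
  have hpos : ∀ t, 0 < w t := by
    intro s
    rcases lt_or_eq_of_le (hnonneg s) with h | h
    · exact h
    exfalso
    -- w s = 0; find x = t₀ + n*T ≥ s with w x = w t₀ > 0, contradiction via Gronwall.
    obtain ⟨n, hn⟩ := exists_nat_ge ((s - t₀) / T)
    set x := t₀ + n * T with hx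
    have hsx : s ≤ x := by
      have : s - t₀ ≤ n * T := by
        have := mul_le_mul_of_nonneg_right hn hT.le
        rwa [div_mul_cancel₀ _ hT.ne'] at this
      linarith
    have hwx : w x = w t₀ := (hpw.nat_mul n) t₀
    -- bound c on [s, x]
    obtain ⟨z, hz, hzK⟩ := isCompact_Icc.exists_isMaxOn ⟨s, Set.left_mem_Icc.mpr hsx⟩
      hc.continuousOn
    set K := c z with hK
    have hzK : ∀ y ∈ Set.Icc s x, c y ≤ K := hzK
    -- consider u t = w t * exp (-K * t), antitone on [s, x]
    set u : ℝ → ℝ := fun t => w t * Real.exp (-K * t) with hu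
    have hud : ∀ t, HasDerivAt u
        (deriv w t * Real.exp (-K * t) + w t * (Real.exp (-K * t) * -K)) t := by
      intro t
      have h1 : HasDerivAt u
          (deriv w t * Real.exp (-K * t) + w t * (Real.exp (-K * t) * (-K * 1))) t :=
        (hw t).hasDerivAt.mul (((hasDerivAt_id t).const_mul (-K)).exp)
      simpa using h1
    have hucont : Continuous u :=
      hwcont.mul (Real.continuous_exp.comp (continuous_const.mul continuous_id))
    have hanti : AntitoneOn u (Set.Icc s x) := by
      apply antitoneOn_of_deriv_nonpos (convex_Icc s x) hucont.continuousOn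
      · intro t ht
        exact (hud t).differentiableAt.differentiableWithinAt
      · intro t ht
        rw [interior_Icc] at ht
        rw [(hud t).deriv, hode t]
        have hcK : c t ≤ K := hzK t ⟨ht.1.le, ht.2.le⟩
        have he : 0 < Real.exp (-K * t) := Real.exp_pos _
        have h1 : 0 ≤ w t := hnonneg t
        have h2 : 0 ≤ w t * w t := mul_nonneg h1 h1
        nlinarith [mul_nonneg h1 (sub_nonneg.mpr hcK)]
    have : u x ≤ u s := hanti ⟨le_refl s, hsx⟩ ⟨hsx, le_refl x⟩ hsx
    have hus : u s = 0 := by simp [hu, ← h]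
    have hle : w x * Real.exp (-K * x) ≤ 0 := by rwa [hus] at this
    have hwxpos : 0 < w x := hwx ▸ ht₀pos
    nlinarith [mul_pos hwxpos (Real.exp_pos (-K * x))]
  -- Step 2: integrate (log ∘ w)' = c - w over a period.
  have hl : ∀ t ∈ Set.uIcc (0:ℝ) T, HasDerivAt (fun t => Real.log (w t)) (c t - w t) t := by
    intro t _
    have := (hw t).hasDerivAt.log (hpos t).ne'
    rwa [hode t, mul_div_cancel_left₀ _ (hpos t).ne'] at this
  have hint : IntervalIntegrable (fun t => c t - w t) MeasureTheory.volume 0 T :=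
    (hc.sub hwcont).intervalIntegrable 0 T
  have hI : ∫ t in (0:ℝ)..T, (c t - w t) = Real.log (w T) - Real.log (w 0) :=
    intervalIntegral.integral_eq_sub_of_hasDerivAt hl hint
  have hwT : w T = w 0 := by have := hwper 0; rwa [zero_add] at this
  rw [hwT, sub_self] at hI
  rw [intervalIntegral.integral_sub (hc.intervalIntegrable 0 T)
    (hwcont.intervalIntegrable 0 T)] at hI
  have hIc : ∫ t in (0:ℝ)..T, c t ≤ 0 := by
    by_contra hcon
    push_neg at hcon
    have := mul_pos (one_div_pos.mpr hT) hcon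
    linarith
  have hIw : 0 < ∫ t in (0:ℝ)..T, w t :=
    intervalIntegral.intervalIntegral_pos_of_pos (hwcont.intervalIntegrable 0 T) hpos hT
  linarith
end

section
/- (Quasimonotone comparison for competitive ODE systems.) Let a, b : ℝ → ℝ be continuous, k, h ≥ 0, and suppose on [0, τ] the pairs (W, Z) and (w, z) of nonnegative C¹ functions satisfy W' ≥ W(a(t) − W − k z), z' ≤ z(b(t) − z − h W), w' ≤ w(a(t) − w − k Z), Z' ≥ Z(b(t) − Z − h w), with W(0) ≥ w(0) and z(0) ≤ Z(0). Then w(t) ≤ W(t) and z(t) ≤ Z(t) for all t ∈ [0, τ]. -/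
open Set Filter Topology

/-- Right Dini-type estimate for the positive part of a differentiable function. -/
lemma dini_aux {g : ℝ → ℝ} {g' x : ℝ} (hg : HasDerivAt g g' x) {r : ℝ}
    (hr : (if g x < 0 then (0:ℝ) else max g' 0) < r) :
    ∀ᶠ y in 𝓝[>] x, (y - x)⁻¹ * (max (g y) 0 - max (g x) 0) < r := by
  by_cases hx : g x < 0
  · rw [if_pos hx] at hr
    have h1 : ∀ᶠ y in 𝓝 x, g y < 0 := hg.continuousAt.eventually_lt continuousAt_const hx
    filter_upwards [eventually_nhdsWithin_of_eventually_nhds h1] with y hy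
    rw [max_eq_right hy.le, max_eq_right hx.le, sub_zero, mul_zero]
    exact hr
  · rw [if_neg hx] at hr
    push_neg at hx
    have hslope : Tendsto (fun y => max (slope g x y) 0) (𝓝[>] x) (𝓝 (max g' 0)) := by
      have := (hasDerivAt_iff_tendsto_slope.mp hg).mono_left
        (nhdsWithin_mono x (fun y hy => ne_of_gt hy : Ioi x ⊆ {x}ᶜ))
      exact this.max tendsto_const_nhds
    have h2 : ∀ᶠ y in 𝓝[>] x, max (slope g x y) 0 < r := hslope.eventually_lt_const hr
    filter_upwards [h2, self_mem_nhdsWithin] with y hy hyx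
    have hpos : (0:ℝ) < y - x := sub_pos.mpr hyx
    have key : max (g y) 0 - max (g x) 0 ≤ max (g y - g x) 0 := by
      rw [max_eq_left hx]
      rcases le_total (g y) 0 with h' | h'
      · rw [max_eq_right h']
        have := le_max_right (g y - g x) 0
        linarith
      · rw [max_eq_left h']; exact le_max_left _ _
    calc (y - x)⁻¹ * (max (g y) 0 - max (g x) 0) ≤ (y - x)⁻¹ * max (g y - g x) 0 := by
          exact mul_le_mul_of_nonneg_left key (inv_nonneg.mpr hpos.le)
      _ = max ((y - x)⁻¹ * (g y - g x)) 0 := by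
          rw [mul_max_of_nonneg _ _ (inv_nonneg.mpr hpos.le), mul_zero]
      _ = max (slope g x y) 0 := by rw [slope_def_field, div_eq_inv_mul]
      _ < r := hy

/-- Quasimonotone comparison principle for the competitive Lotka–Volterra ODE system. -/
theorem competition_comparison
    (τ : ℝ) (hτ : 0 < τ) (a b : ℝ → ℝ) (ha : Continuous a) (hb : Continuous b)
    (k h : ℝ) (hk : 0 ≤ k) (hh : 0 ≤ h)
    (W w Z z : ℝ → ℝ)
    (hW : Differentiable ℝ W) (hw : Differentiable ℝ w)
    (hZ : Differentiable ℝ Z) (hz : Differentiable ℝ z)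
    (hW' : Continuous (deriv W)) (hw' : Continuous (deriv w))
    (hZ' : Continuous (deriv Z)) (hz' : Continuous (deriv z))
    (hWnn : ∀ t ∈ Set.Icc 0 τ, 0 ≤ W t) (hwnn : ∀ t ∈ Set.Icc 0 τ, 0 ≤ w t)
    (hZnn : ∀ t ∈ Set.Icc 0 τ, 0 ≤ Z t) (hznn : ∀ t ∈ Set.Icc 0 τ, 0 ≤ z t)
    (hWineq : ∀ t ∈ Set.Icc 0 τ, W t * (a t - W t - k * z t) ≤ deriv W t)
    (hzineq : ∀ t ∈ Set.Icc 0 τ, deriv z t ≤ z t * (b t - z t - h * W t))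
    (hwineq : ∀ t ∈ Set.Icc 0 τ, deriv w t ≤ w t * (a t - w t - k * Z t))
    (hZineq : ∀ t ∈ Set.Icc 0 τ, Z t * (b t - Z t - h * w t) ≤ deriv Z t)
    (hinit₁ : w 0 ≤ W 0) (hinit₂ : z 0 ≤ Z 0) :
    ∀ t ∈ Set.Icc 0 τ, w t ≤ W t ∧ z t ≤ Z t := by
  -- positive parts of the differences
  set f : ℝ → ℝ := fun t => max (w t - W t) 0 + max (z t - Z t) 0 with hf_def
  set C : ℝ → ℝ := fun x =>
    |a x - w x - W x - k * Z x| + k * W x + |b x - z x - Z x - h * W x| + h * Z x with hC_def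
  have hCcont : Continuous C := by
    apply Continuous.add
    apply Continuous.add
    apply Continuous.add
    · exact (((ha.sub hw.continuous).sub hW.continuous).sub
        (continuous_const.mul hZ.continuous)).abs
    · exact continuous_const.mul hW.continuous
    · exact (((hb.sub hz.continuous).sub hZ.continuous).sub
        (continuous_const.mul hW.continuous)).abs
    · exact continuous_const.mul hZ.continuous
  obtain ⟨x₀, hx₀, hM'⟩ := isCompact_Icc.exists_isMaxOn (Set.nonempty_Icc.mpr hτ.le)
    hCcont.continuousOn
  have hM : ∀ y ∈ Set.Icc 0 τ, C y ≤ C x₀ := fun y hy => hM' hy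
  set M : ℝ := C x₀ with hM_def
  -- the Dini-derivative bound function
  set F : ℝ → ℝ := fun x =>
    (if w x - W x < 0 then (0:ℝ) else max (deriv w x - deriv W x) 0) +
    (if z x - Z x < 0 then (0:ℝ) else max (deriv z x - deriv Z x) 0) with hF_def
  have hfcont : ContinuousOn f (Set.Icc 0 τ) :=
    (((hw.continuous.sub hW.continuous).max continuous_const).add
      ((hz.continuous.sub hZ.continuous).max continuous_const)).continuousOn
  -- liminf slope condition
  have hliminf : ∀ x ∈ Set.Ico 0 τ, ∀ r, F x < r →
      ∃ᶠ y in 𝓝[>] x, (y - x)⁻¹ * (f y - f x) < r := by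
    intro x hx r hr
    set Du : ℝ := if w x - W x < 0 then (0:ℝ) else max (deriv w x - deriv W x) 0 with hDu
    set Dv : ℝ := if z x - Z x < 0 then (0:ℝ) else max (deriv z x - deriv Z x) 0 with hDv
    have hFx : F x = Du + Dv := rfl
    rw [hFx] at hr
    set e : ℝ := (r - (Du + Dv)) / 2 with he
    have hepos : 0 < e := by simp only [he]; linarith
    have hgu : HasDerivAt (fun t => w t - W t) (deriv w x - deriv W x) x :=
      ((hw x).hasDerivAt).sub ((hW x).hasDerivAt)
    have hgv : HasDerivAt (fun t => z t - Z t) (deriv z x - deriv Z x) x :=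
      ((hz x).hasDerivAt).sub ((hZ x).hasDerivAt)
    have h1 := dini_aux hgu (r := Du + e) (by rw [← hDu]; linarith)
    have h2 := dini_aux hgv (r := Dv + e) (by rw [← hDv]; linarith)
    apply ((h1.and h2).mono ?_).frequently
    intro y ⟨q1, q2⟩
    have hsplit : (y - x)⁻¹ * (f y - f x) =
        (y - x)⁻¹ * (max (w y - W y) 0 - max (w x - W x) 0) +
        (y - x)⁻¹ * (max (z y - Z y) 0 - max (z x - Z x) 0) := by
      simp only [hf_def]; ring
    rw [hsplit]
    have : Du + e + (Dv + e) = r := by simp only [he]; ring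
    linarith
  -- the differential inequality bound
  have hbound : ∀ x ∈ Set.Ico 0 τ, F x ≤ M * f x + 0 := by
    intro x hx
    have hxI : x ∈ Set.Icc 0 τ := Set.Ico_subset_Icc_self hx
    have hWx := hWnn x hxI
    have hwx := hwnn x hxI
    have hZx := hZnn x hxI
    have hzx := hznn x hxI
    have hunn : (0:ℝ) ≤ max (w x - W x) 0 := le_max_right _ _
    have hvnn : (0:ℝ) ≤ max (z x - Z x) 0 := le_max_right _ _
    have hDu : (if w x - W x < 0 then (0:ℝ) else max (deriv w x - deriv W x) 0) ≤
        |a x - w x - W x - k * Z x| * max (w x - W x) 0 +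
        (k * W x) * max (z x - Z x) 0 := by
      split_ifs with h'
      · exact add_nonneg (mul_nonneg (abs_nonneg _) hunn)
          (mul_nonneg (mul_nonneg hk hWx) hvnn)
      · have hu0 : 0 ≤ w x - W x := not_lt.mp h'
        have hd : deriv w x - deriv W x ≤
            (a x - w x - W x - k * Z x) * (w x - W x) + k * W x * (z x - Z x) := by
          have h1 := hwineq x hxI
          have h2 := hWineq x hxI
          nlinarith [h1, h2]
        have e1 : (a x - w x - W x - k * Z x) * (w x - W x) ≤
            |a x - w x - W x - k * Z x| * max (w x - W x) 0 := by
          rw [max_eq_left hu0]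
          exact mul_le_mul_of_nonneg_right (le_abs_self _) hu0
        have e2 : k * W x * (z x - Z x) ≤ (k * W x) * max (z x - Z x) 0 :=
          mul_le_mul_of_nonneg_left (le_max_left _ _) (mul_nonneg hk hWx)
        refine max_le (by linarith) ?_
        exact add_nonneg (mul_nonneg (abs_nonneg _) hunn)
          (mul_nonneg (mul_nonneg hk hWx) hvnn)
    have hDv : (if z x - Z x < 0 then (0:ℝ) else max (deriv z x - deriv Z x) 0) ≤
        |b x - z x - Z x - h * W x| * max (z x - Z x) 0 +
        (h * Z x) * max (w x - W x) 0 := by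
      split_ifs with h'
      · exact add_nonneg (mul_nonneg (abs_nonneg _) hvnn)
          (mul_nonneg (mul_nonneg hh hZx) hunn)
      · have hv0 : 0 ≤ z x - Z x := not_lt.mp h'
        have hd : deriv z x - deriv Z x ≤
            (b x - z x - Z x - h * W x) * (z x - Z x) + h * Z x * (w x - W x) := by
          have h1 := hzineq x hxI
          have h2 := hZineq x hxI
          nlinarith [h1, h2]
        have e1 : (b x - z x - Z x - h * W x) * (z x - Z x) ≤
            |b x - z x - Z x - h * W x| * max (z x - Z x) 0 := by
          rw [max_eq_left hv0]
          exact mul_le_mul_of_nonneg_right (le_abs_self _) hv0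
        have e2 : h * Z x * (w x - W x) ≤ (h * Z x) * max (w x - W x) 0 :=
          mul_le_mul_of_nonneg_left (le_max_left _ _) (mul_nonneg hh hZx)
        refine max_le (by linarith) ?_
        exact add_nonneg (mul_nonneg (abs_nonneg _) hvnn)
          (mul_nonneg (mul_nonneg hh hZx) hunn)
    have hCM : C x ≤ M := hM x hxI
    have hCx : C x = |a x - w x - W x - k * Z x| + k * W x +
        |b x - z x - Z x - h * W x| + h * Z x := rfl
    have hkW : 0 ≤ k * W x := mul_nonneg hk hWx
    have hhZ : 0 ≤ h * Z x := mul_nonneg hh hZx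
    have c1 : |a x - w x - W x - k * Z x| + h * Z x ≤ M := by
      have := abs_nonneg (b x - z x - Z x - h * W x); rw [hCx] at hCM; linarith
    have c2 : k * W x + |b x - z x - Z x - h * W x| ≤ M := by
      have := abs_nonneg (a x - w x - W x - k * Z x); rw [hCx] at hCM; linarith
    have b1 : (|a x - w x - W x - k * Z x| + h * Z x) * max (w x - W x) 0 ≤
        M * max (w x - W x) 0 := mul_le_mul_of_nonneg_right c1 hunn
    have b2 : (k * W x + |b x - z x - Z x - h * W x|) * max (z x - Z x) 0 ≤
        M * max (z x - Z x) 0 := mul_le_mul_of_nonneg_right c2 hvnn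
    rw [add_mul] at b1 b2
    have hFx : F x = (if w x - W x < 0 then (0:ℝ) else max (deriv w x - deriv W x) 0) +
        (if z x - Z x < 0 then (0:ℝ) else max (deriv z x - deriv Z x) 0) := rfl
    have hfx : f x = max (w x - W x) 0 + max (z x - Z x) 0 := rfl
    rw [hFx, hfx, mul_add]
    linarith
  -- initial condition
  have hf0 : f 0 ≤ 0 := by
    have h1 : max (w 0 - W 0) 0 = 0 := max_eq_right (by linarith)
    have h2 : max (z 0 - Z 0) 0 = 0 := max_eq_right (by linarith)
    simp only [hf_def, h1, h2, add_zero]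
    exact le_refl 0
  -- apply Grönwall
  have main := le_gronwallBound_of_liminf_deriv_right_le (δ := 0) (K := M) (ε := 0)
    hfcont hliminf hf0 hbound
  intro t ht
  have hft : f t ≤ 0 := by
    have := main t ht
    rwa [gronwallBound_ε0_δ0] at this
  have hfteq : f t = max (w t - W t) 0 + max (z t - Z t) 0 := rfl
  rw [hfteq] at hft
  have hunn : (0:ℝ) ≤ max (w t - W t) 0 := le_max_right _ _
  have hvnn : (0:ℝ) ≤ max (z t - Z t) 0 := le_max_right _ _
  have hu : w t - W t ≤ max (w t - W t) 0 := le_max_left _ _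
  have hv : z t - Z t ≤ max (z t - Z t) 0 := le_max_left _ _
  exact ⟨by linarith, by linarith⟩
end

section
/- Let z : ℝ → ℝ be the positive T-periodic solution of z' = z(φ(t) − z) where φ is continuous T-periodic with positive mean. If ψ is another continuous T-periodic function with ψ(t) ≤ φ(t) for all t, ψ having positive mean, and y is the positive T-periodic solution of y' = y(ψ(t) − y), then max_{[0,T]} y ≤ max_{[0,T]} φ and y(t) ≤ z(t) for all t; moreover if ψ ≢ φ then y(t) < z(t) for all t. -/
open Set

lemma periodic_global_max {f : ℝ → ℝ} (hf : Continuous f) {T : ℝ} (hT : 0 < T)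
    (hper : ∀ t, f (t + T) = f t) :
    ∃ t₀ ∈ Set.Icc (0:ℝ) T, ∀ s, f s ≤ f t₀ := by
  have hP : Function.Periodic f T := hper
  obtain ⟨t₀, ht₀, hmax⟩ := isCompact_Icc.exists_isMaxOn (Set.nonempty_Icc.2 hT.le)
    hf.continuousOn (s := Set.Icc (0:ℝ) T)
  refine ⟨t₀, ht₀, fun s => ?_⟩
  obtain ⟨s', hs', hfs⟩ := hP.exists_mem_Ico₀ hT s
  rw [hfs]
  exact hmax (Set.Ico_subset_Icc_self hs')


/-- Comparison of positive periodic logistic solutions: if ψ ≤ φ then the solutions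
satisfy max y ≤ max φ and y ≤ z, with strict inequality when ψ ≢ φ. -/
theorem logistic_periodic_strict_comparison
    (T : ℝ) (hT : 0 < T) (φ ψ : ℝ → ℝ) (hφ : Continuous φ) (hψ : Continuous ψ)
    (hφper : ∀ t, φ (t + T) = φ t) (hψper : ∀ t, ψ (t + T) = ψ t)
    (hφmean : 0 < (1 / T) * ∫ t in (0:ℝ)..T, φ t)
    (hψmean : 0 < (1 / T) * ∫ t in (0:ℝ)..T, ψ t)
    (hle : ∀ t, ψ t ≤ φ t)
    (z y : ℝ → ℝ)
    (hz : Differentiable ℝ z) (hy : Differentiable ℝ y)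
    (hzpos : ∀ t, 0 < z t) (hypos : ∀ t, 0 < y t)
    (hzode : ∀ t, deriv z t = z t * (φ t - z t))
    (hyode : ∀ t, deriv y t = y t * (ψ t - y t))
    (hzper : ∀ t, z (t + T) = z t) (hyper : ∀ t, y (t + T) = y t) :
    sSup (y '' Set.Icc 0 T) ≤ sSup (φ '' Set.Icc 0 T) ∧
    (∀ t, y t ≤ z t) ∧
    ((∃ t, ψ t ≠ φ t) → ∀ t, y t < z t) := by
  have hycont : Continuous y := hy.continuous
  have hzcont : Continuous z := hz.continuous
  -- Part 1
  have part1 : sSup (y '' Set.Icc 0 T) ≤ sSup (φ '' Set.Icc 0 T) := by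
    obtain ⟨t₁, ht₁, hmax⟩ := periodic_global_max hycont hT hyper
    have hsup : sSup (y '' Set.Icc 0 T) = y t₁ := by
      refine IsGreatest.csSup_eq ⟨Set.mem_image_of_mem y ht₁, ?_⟩
      rintro _ ⟨s, -, rfl⟩; exact hmax s
    have hloc : IsLocalMax y t₁ := Filter.Eventually.of_forall hmax
    have hd : deriv y t₁ = 0 := hloc.deriv_eq_zero
    rw [hyode t₁] at hd
    have hy1 : y t₁ = ψ t₁ := by
      rcases mul_eq_zero.1 hd with h | h
      · exact absurd h (hypos t₁).ne'
      · linarith [sub_eq_zero.1 h]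
    have : y t₁ ≤ φ t₁ := hy1 ▸ hle t₁
    rw [hsup]
    exact this.trans (le_csSup (isCompact_Icc.image hφ).bddAbove (Set.mem_image_of_mem φ ht₁))
  -- Part 2
  have part2 : ∀ t, y t ≤ z t := by
    set f : ℝ → ℝ := fun t => y t / z t with hf
    have hfc : Continuous f := hycont.div hzcont fun t => (hzpos t).ne'
    have hfper : ∀ t, f (t + T) = f t := fun t => by simp [hf, hyper t, hzper t]
    obtain ⟨t₀, ht₀, hmax⟩ := periodic_global_max hfc hT hfper
    have hloc : IsLocalMax f t₀ := Filter.Eventually.of_forall hmax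
    have hd : deriv f t₀ = 0 := hloc.deriv_eq_zero
    have hderiv : deriv f t₀ =
        (deriv y t₀ * z t₀ - y t₀ * deriv z t₀) / z t₀ ^ 2 :=
      deriv_div (hy t₀) (hz t₀) (hzpos t₀).ne'
    rw [hderiv] at hd
    have hnum : deriv y t₀ * z t₀ - y t₀ * deriv z t₀ = 0 := by
      have := (hzpos t₀)
      field_simp at hd
      linarith [hd]
    rw [hyode t₀, hzode t₀] at hnum
    have key : (y t₀ * z t₀) * ((ψ t₀ - y t₀) - (φ t₀ - z t₀)) = 0 := by
      linear_combination hnum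
    have hyz : y t₀ ≤ z t₀ := by
      rcases mul_eq_zero.1 key with h | h
      · exact absurd h (mul_pos (hypos t₀) (hzpos t₀)).ne'
      · have := hle t₀; linarith
    intro t
    have := hmax t
    have hz0 := hzpos t
    have hz1 := hzpos t₀
    have : y t / z t ≤ y t₀ / z t₀ := this
    have h1 : y t₀ / z t₀ ≤ 1 := by
      rw [div_le_one hz1]; exact hyz
    have : y t / z t ≤ 1 := this.trans h1
    calc y t = (y t / z t) * z t := by field_simp
    _ ≤ 1 * z t := by nlinarith
    _ = z t := one_mul _
  refine ⟨part1, part2, ?_⟩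
  -- Part 3
  rintro ⟨s₀, hs₀⟩ t
  by_contra hcon
  push_neg at hcon
  have heq : y t = z t := le_antisymm (part2 t) hcon
  -- u = log z - log y ≥ 0
  set u : ℝ → ℝ := fun s => Real.log (z s) - Real.log (y s) with hu
  have hunn : ∀ s, 0 ≤ u s := fun s =>
    sub_nonneg.2 (Real.log_le_log (hypos s) (part2 s))
  have hud : ∀ s, HasDerivAt u ((φ s - z s) - (ψ s - y s)) s := by
    intro s
    have h1 : HasDerivAt (fun s => Real.log (z s)) (deriv z s / z s) s :=
      ((hz s).hasDerivAt).log (hzpos s).ne'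
    have h2 : HasDerivAt (fun s => Real.log (y s)) (deriv y s / y s) s :=
      ((hy s).hasDerivAt).log (hypos s).ne'
    have e1 : deriv z s / z s = φ s - z s := by
      rw [hzode s, mul_comm, mul_div_assoc, div_self (hzpos s).ne', mul_one]
    have e2 : deriv y s / y s = ψ s - y s := by
      rw [hyode s, mul_comm, mul_div_assoc, div_self (hypos s).ne', mul_one]
    have := h1.sub h2
    rwa [e1, e2] at this
  have hucont : Continuous u := by
    have : Differentiable ℝ u := fun s => (hud s).differentiableAt
    exact this.continuous
  have huper : ∀ s, u (s + T) = u s := fun s => by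
    simp only [hu, hzper s, hyper s]
  obtain ⟨tM, -, hM⟩ := periodic_global_max hucont hT huper
  obtain ⟨tB, -, hB⟩ := periodic_global_max hycont hT hyper
  set M := u tM with hMdef
  set B := y tB with hBdef
  set K := B * Real.exp M with hK
  -- key pointwise inequality: z - y ≤ K * u
  have hkey : ∀ s, z s - y s ≤ K * u s := by
    intro s
    have hyp := hypos s
    have hzp := hzpos s
    have hexp : Real.exp (u s) = z s / y s := by
      rw [hu]; rw [Real.exp_sub, Real.exp_log hzp, Real.exp_log hyp]
    have h1 : Real.exp (u s) - 1 ≤ u s * Real.exp (u s) := by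
      have := Real.add_one_le_exp (-(u s))
      have hpos := Real.exp_pos (u s)
      have hmul : (1 - u s) * Real.exp (u s) ≤ Real.exp (-(u s)) * Real.exp (u s) := by
        nlinarith
      rw [← Real.exp_add] at hmul
      simp at hmul
      nlinarith
    have h2 : Real.exp (u s) ≤ Real.exp M :=
      Real.exp_le_exp.2 (hM s)
    have h3 : u s * Real.exp (u s) ≤ u s * Real.exp M :=
      mul_le_mul_of_nonneg_left h2 (hunn s)
    have h4 : z s - y s = y s * (Real.exp (u s) - 1) := by
      rw [hexp]; field_simp
    rw [h4, hK]
    have hyB : y s ≤ B := hB s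
    have hexpM : (0:ℝ) < Real.exp M := Real.exp_pos M
    nlinarith [hunn s, mul_le_mul_of_nonneg_right hyB (mul_nonneg (hunn s) hexpM.le)]
  -- Gronwall: g = u * exp(K s) is monotone
  set g : ℝ → ℝ := fun s => u s * Real.exp (K * s) with hg
  have hgd : ∀ s, HasDerivAt g
      (((φ s - z s) - (ψ s - y s)) * Real.exp (K * s) + u s * (Real.exp (K * s) * K)) s := by
    intro s
    have he : HasDerivAt (fun s => Real.exp (K * s)) (Real.exp (K * s) * K) s := by
      have : HasDerivAt (fun s : ℝ => K * s) K s := by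
        simpa using (hasDerivAt_id s).const_mul K
      exact this.exp
    exact (hud s).mul he
  have hgmono : Monotone g := by
    apply monotone_of_deriv_nonneg
    · exact fun s => (hgd s).differentiableAt
    · intro s
      rw [(hgd s).deriv]
      have h1 : 0 ≤ φ s - ψ s := sub_nonneg.2 (hle s)
      have h2 := hkey s
      have h3 : (0:ℝ) < Real.exp (K * s) := Real.exp_pos _
      nlinarith
  -- u t = 0
  have hut : u t = 0 := by
    have : Real.log (z t) = Real.log (y t) := by rw [heq]
    simp [hu, this]
  -- u vanishes on (-∞, t]
  have hzero : ∀ s, s ≤ t → u s = 0 := by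
    intro s hs
    have h1 : g s ≤ g t := hgmono hs
    have h2 : g t = 0 := by simp [hg, hut]
    have h3 : 0 ≤ g s := mul_nonneg (hunn s) (Real.exp_pos _).le
    have h4 : u s * Real.exp (K * s) = 0 := le_antisymm (h2 ▸ h1) h3
    rcases mul_eq_zero.1 h4 with h | h
    · exact h
    · exact absurd h (Real.exp_pos _).ne'
  -- by periodicity u ≡ 0, so z = y everywhere
  have hP : Function.Periodic u T := huper
  have huall : ∀ s, u s = 0 := by
    intro s
    obtain ⟨n, hn⟩ := exists_nat_ge ((s - t) / T)
    have hnT : s - n * T ≤ t := by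
      have : (s - t) / T ≤ n := hn
      rw [div_le_iff₀ hT] at this
      linarith
    have := hP.sub_nat_mul_eq (x := s) n
    rw [← this]
    exact hzero _ hnT
  have hzy : ∀ s, z s = y s := by
    intro s
    have h := huall s
    have : Real.log (z s) = Real.log (y s) := by
      simpa [hu, sub_eq_zero] using h
    have := Real.exp_log (hzpos s) ▸ Real.exp_log (hypos s) ▸ congrArg Real.exp this
    simpa [Real.exp_log (hzpos s), Real.exp_log (hypos s)] using this
  -- then ψ = φ, contradiction
  apply hs₀
  have hfun : z = y := funext hzy
  have hd : deriv z s₀ = deriv y s₀ := by rw [hfun]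
  rw [hzode s₀, hyode s₀, ← hzy s₀] at hd
  have := mul_left_cancel₀ (hzpos s₀).ne' hd
  linarith
end

section
/- Let c : ℝ → ℝ be continuous T-periodic with positive mean, and let W be the unique positive T-periodic solution of W' = W(c(t) − W). Then for any solution w of the initial value problem w' = w(c(t) − w), w(0) = w₀ > 0, one has w(t + nT) → W(t) as n → ∞, uniformly for t ∈ [0, T]. -/
/-!
The substitution `u = 1 / w` turns the logistic equation into the linear equation
`u' = 1 - c u`, so the difference `1 / w - 1 / W` of two positive solutions solves `u' = -c u`
and equals `(1 / w₀ - 1 / W 0) * exp (-∫₀ᵗ c)`. Over each period the integral of `c` grows by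
`∫₀ᵀ c > 0`, so `1 / w (t + n T) - 1 / W t` is a bounded function of `t ∈ [0, T]` times
`exp (-∫₀ᵀ c) ^ n`, which tends to `0` uniformly; since `1 / W` is bounded away from zero on
`[0, T]`, inverting preserves the uniform convergence.
-/

open Real Filter Set Topology

theorem tendstoUniformlyOn_of_dist_le {ι α β : Type*} [PseudoMetricSpace β] {l : Filter ι}
    {s : Set α} {F : ι → α → β} {G : α → β} {a : ι → ℝ} (ha : Tendsto a l (𝓝 0))
    (hF : ∀ᶠ i in l, ∀ x ∈ s, dist (G x) (F i x) ≤ a i) : TendstoUniformlyOn F G l s := by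
  rw [Metric.tendstoUniformlyOn_iff]
  intro ε hε
  filter_upwards [hF, ha.eventually (gt_mem_nhds hε)] with i hi hai x hx
  exact (hi x hx).trans_lt hai

theorem tendstoUniformlyOn_add_mul_pow {α : Type*} {s : Set α} {G h : α → ℝ} {M r : ℝ}
    (hM : ∀ x ∈ s, ‖h x‖ ≤ M) (hr₀ : 0 ≤ r) (hr₁ : r < 1) :
    TendstoUniformlyOn (fun (n : ℕ) x => G x + h x * r ^ n) G atTop s := by
  refine tendstoUniformlyOn_of_dist_le (a := fun n => M * r ^ n) ?_
    (Eventually.of_forall fun n x hx => ?_)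
  · simpa using (tendsto_pow_atTop_nhds_zero_of_lt_one hr₀ hr₁).const_mul M
  · rw [dist_self_add_right, norm_mul, norm_pow, Real.norm_of_nonneg hr₀]
    exact mul_le_mul_of_nonneg_right (hM x hx) (pow_nonneg hr₀ n)

theorem TendstoUniformlyOn.inv₀_of_le_norm {ι α 𝕜 : Type*} [NormedDivisionRing 𝕜]
    {l : Filter ι} {s : Set α} {F : ι → α → 𝕜} {G : α → 𝕜} {m : ℝ} (hm : 0 < m)
    (hG : ∀ x ∈ s, m ≤ ‖G x‖) (h : TendstoUniformlyOn F G l s) :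
    TendstoUniformlyOn (fun i x => (F i x)⁻¹) (fun x => (G x)⁻¹) l s := by
  rw [Metric.tendstoUniformlyOn_iff] at h ⊢
  intro ε hε
  filter_upwards [h (min (m / 2) (ε * m ^ 2 / 2)) (by positivity)] with i hi x hx
  have hGx := hG x hx
  have hFx : m / 2 < ‖F i x‖ := by
    have := (hi x hx).trans_le (min_le_left _ _)
    linarith [norm_sub_norm_le (G x) (F i x), dist_eq_norm (G x) (F i x)]
  have hG₀ : 0 < ‖G x‖ := hm.trans_le hGx
  have hF₀ : 0 < ‖F i x‖ := (half_pos hm).trans hFx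
  rw [dist_inv_inv₀ (norm_pos_iff.mp hG₀) (norm_pos_iff.mp hF₀), div_lt_iff₀ (mul_pos hG₀ hF₀)]
  calc dist (G x) (F i x) < ε * m ^ 2 / 2 := (hi x hx).trans_le (min_le_right _ _)
    _ = ε * (m * (m / 2)) := by ring
    _ ≤ ε * (‖G x‖ * ‖F i x‖) := by gcongr

theorem eq_mul_exp_integral_of_hasDerivAt {f g : ℝ → ℝ} {a : ℝ} (hg : Continuous g)
    (hf : ∀ t ≥ a, HasDerivAt f (g t * f t) t) {t : ℝ} (ht : a ≤ t) :
    f t = f a * exp (∫ s in a..t, g s) := by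
  have hG : ∀ t, HasDerivAt (fun t => ∫ s in a..t, g s) (g t) t := fun t =>
    (hg.integral_hasStrictDerivAt a t).hasDerivAt
  have hconst : ∀ x ∈ Icc a t,
      f x * exp (-∫ s in a..x, g s) = f a * exp (-∫ s in a..a, g s) := by
    refine constant_of_has_deriv_right_zero (fun x hx => ?_) (fun x hx => ?_)
    · exact ((hf x hx.1).continuousAt.mul (hG x).neg.exp.continuousAt).continuousWithinAt
    · refine (((hf x hx.1).mul (hG x).neg.exp).congr_deriv ?_).hasDerivWithinAt
      simp only [Pi.neg_apply]
      ring
  have := hconst t ⟨ht, le_rfl⟩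
  rw [intervalIntegral.integral_same, neg_zero, exp_zero, mul_one] at this
  rw [← this, mul_assoc, ← exp_add, neg_add_cancel, exp_zero, mul_one]

theorem Function.Periodic.intervalIntegral_add_nat_mul {c : ℝ → ℝ} {T : ℝ}
    (hper : Function.Periodic c T) (hc : Continuous c) (t : ℝ) (n : ℕ) :
    ∫ s in (0:ℝ)..t + n * T, c s = (∫ s in (0:ℝ)..t, c s) + n * ∫ s in (0:ℝ)..T, c s := by
  have hint : ∀ a b, IntervalIntegrable c MeasureTheory.volume a b := fun a b =>
    hc.intervalIntegrable a b
  rw [(hper.nat_mul n).intervalIntegral_add_eq_add 0 t hint, zero_add, add_right_inj]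
  simpa only [zsmul_eq_mul, Int.cast_natCast, zero_add] using
    hper.intervalIntegral_add_zsmul_eq n 0 hint

theorem HasDerivAt.inv_of_logistic {c v : ℝ → ℝ} {t : ℝ}
    (hv : HasDerivAt v (v t * (c t - v t)) t) (h₀ : v t ≠ 0) :
    HasDerivAt (fun s => (v s)⁻¹) (-c t * (v t)⁻¹ + 1) t :=
  (hv.inv h₀).congr_deriv (by field_simp; ring)

theorem pos_of_logistic {c v : ℝ → ℝ} {a : ℝ} (hc : Continuous c) (hv : Continuous v)
    (hder : ∀ t ≥ a, HasDerivAt v (v t * (c t - v t)) t) (ha : 0 < v a) {t : ℝ} (ht : a ≤ t) :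
    0 < v t := by
  rw [eq_mul_exp_integral_of_hasDerivAt (hc.sub hv)
    (fun s hs => (hder s hs).congr_deriv (mul_comm _ _)) ht]
  positivity

theorem inv_sub_inv_eq_mul_exp_of_logistic {c v V : ℝ → ℝ} {a : ℝ} (hc : Continuous c)
    (hv : ∀ t ≥ a, HasDerivAt v (v t * (c t - v t)) t)
    (hV : ∀ t ≥ a, HasDerivAt V (V t * (c t - V t)) t)
    (hv₀ : ∀ t ≥ a, v t ≠ 0) (hV₀ : ∀ t ≥ a, V t ≠ 0) {t : ℝ} (ht : a ≤ t) :
    (v t)⁻¹ - (V t)⁻¹ = ((v a)⁻¹ - (V a)⁻¹) * exp (-∫ s in a..t, c s) := by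
  rw [← intervalIntegral.integral_neg]
  refine eq_mul_exp_integral_of_hasDerivAt (f := fun s => (v s)⁻¹ - (V s)⁻¹) hc.neg
    (fun s hs => ?_) ht
  refine (((hv s hs).inv_of_logistic (hv₀ s hs)).sub
    ((hV s hs).inv_of_logistic (hV₀ s hs))).congr_deriv ?_
  simp only [Pi.neg_apply]
  ring

theorem inv_add_nat_mul_of_logistic {c v V : ℝ → ℝ} {T : ℝ} (hT : 0 ≤ T) (hc : Continuous c)
    (hper : Function.Periodic c T) (hVper : Function.Periodic V T)
    (hv : ∀ t ≥ 0, HasDerivAt v (v t * (c t - v t)) t)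
    (hV : ∀ t ≥ 0, HasDerivAt V (V t * (c t - V t)) t)
    (hv₀ : ∀ t ≥ 0, v t ≠ 0) (hV₀ : ∀ t ≥ 0, V t ≠ 0) {t : ℝ} (ht : 0 ≤ t) (n : ℕ) :
    (v (t + n * T))⁻¹ = (V t)⁻¹ +
      ((v 0)⁻¹ - (V 0)⁻¹) * exp (-∫ s in (0:ℝ)..t, c s) * exp (-∫ s in (0:ℝ)..T, c s) ^ n := by
  rw [← sub_eq_iff_eq_add', ← hVper.nat_mul n t,
    inv_sub_inv_eq_mul_exp_of_logistic hc hv hV hv₀ hV₀ (by positivity),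
    hper.intervalIntegral_add_nat_mul hc, neg_add, exp_add, ← mul_neg, exp_nat_mul, mul_assoc]

/-- Any solution of the logistic equation w' = w(c - w) with positive initial data
converges, in the periodic sense, to the unique positive T-periodic solution W:
w(t + nT) → W(t) uniformly on [0, T]. -/
theorem logistic_converges_to_periodic
    (T : ℝ) (hT : 0 < T) (c : ℝ → ℝ) (hc : Continuous c)
    (hper : ∀ t, c (t + T) = c t)
    (hmean : 0 < (1 / T) * ∫ t in (0:ℝ)..T, c t)
    (W : ℝ → ℝ) (hW : Differentiable ℝ W) (hWpos : ∀ t, 0 < W t)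
    (hWode : ∀ t, deriv W t = W t * (c t - W t))
    (hWper : ∀ t, W (t + T) = W t)
    (w : ℝ → ℝ) (w₀ : ℝ) (hw₀ : 0 < w₀)
    (hw : Differentiable ℝ w) (hwinit : w 0 = w₀)
    (hwode : ∀ t ≥ 0, deriv w t = w t * (c t - w t)) :
    TendstoUniformlyOn (fun (n : ℕ) (t : ℝ) => w (t + n * T)) W
      Filter.atTop (Set.Icc 0 T) := by
  have hwd : ∀ t ≥ 0, HasDerivAt w (w t * (c t - w t)) t := fun t ht =>
    hwode t ht ▸ (hw t).hasDerivAt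
  have hWd : ∀ t ≥ 0, HasDerivAt W (W t * (c t - W t)) t := fun t _ =>
    hWode t ▸ (hW t).hasDerivAt
  have hwpos : ∀ t ≥ 0, 0 < w t := fun t ht =>
    pos_of_logistic hc hw.continuous hwd (hwinit ▸ hw₀) ht
  have hI : 0 < ∫ s in (0:ℝ)..T, c s := (mul_pos_iff_of_pos_left (by positivity)).mp hmean
  obtain ⟨M, hM⟩ := isCompact_Icc.exists_bound_of_continuousOn (s := Icc 0 T)
    (f := fun t => (w₀⁻¹ - (W 0)⁻¹) * exp (-∫ s in (0:ℝ)..t, c s)) (by fun_prop)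
  obtain ⟨K, hK⟩ := isCompact_Icc.exists_bound_of_continuousOn (s := Icc 0 T)
    hW.continuous.continuousOn
  have hKpos : 0 < K := (hWpos 0).trans_le ((le_abs_self _).trans (hK 0 ⟨le_rfl, hT.le⟩))
  have hinv : TendstoUniformlyOn (fun (n : ℕ) t => (w (t + n * T))⁻¹) (fun t => (W t)⁻¹)
      atTop (Icc 0 T) := by
    refine (tendstoUniformlyOn_add_mul_pow hM (exp_pos _).le
      (exp_lt_one_iff.mpr (neg_neg_of_pos hI))).congr (Eventually.of_forall fun n t ht => ?_)
    dsimp only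
    rw [inv_add_nat_mul_of_logistic hT.le hc hper hWper hwd hWd (fun s hs => (hwpos s hs).ne')
      (fun s _ => (hWpos s).ne') ht.1, hwinit]
  simpa only [inv_inv] using hinv.inv₀_of_le_norm (inv_pos.mpr hKpos) fun t ht => by
    rw [norm_inv, Real.norm_of_nonneg (hWpos t).le]
    exact inv_anti₀ (hWpos t) ((le_abs_self _).trans (hK t ht))
end
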